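/- Let P be a finite poset. For x ≤ y in P define μ(x,y) = Σ_i (−1)^i · rank_ℤ H̃^i(x,y), the alternating sum of the ranks of the reduced cohomology groups of the interval (so in particular μ(x,x) = 1). Then for every pair x < y in P, one has Σ_{x ≤ z ≤ y} μ(x,z) = 0. -/

import Mathlib

attribute [local instance] Classical.propDecidable

/-- A basis element of `C̃^{m-2}(x,z)`: a strictly increasing sequence
`x = w 0 < w 1 < ⋯ < w m = z` in `P`.  For `x < z` these correspond to the
`(m-2)`-dimensional faces of the nerve of the open interval `(x,z)` (including the
empty face for `m = 1`), and for `x = z` the only such sequence is the constant one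
with `m = 0`, giving the complex `ℤ` placed in degree `-2`. -/
abbrev IntervalChain {P : Type*} [PartialOrder P] (x z : P) (m : ℕ) : Type _ :=
  {w : Fin (m + 1) → P // StrictMono w ∧ w 0 = x ∧ w (Fin.last m) = z}

/-- The degree-`(m-2)` term of the reduced cochain complex `C̃^•(x,z)` of the open
interval `(x,z)` (with the convention that `C̃^•(x,x)` is `ℤ` in degree `-2`). -/
abbrev IntervalCochain {P : Type*} [PartialOrder P] (x z : P) (m : ℕ) : Type _ :=
  IntervalChain x z m →₀ ℤ

noncomputable instance {P : Type*} [PartialOrder P] [Fintype P] (x z : P) (m : ℕ) :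
    Fintype (IntervalChain x z m) :=
  Subtype.fintype _

/-- The differential `C̃^{m-2}(x,z) → C̃^{m-1}(x,z)`: the alternating sum over all ways
of inserting an element into the sequence, the sign being `(-1)^j` where `j` is the
(0-indexed) position of the new element in the resulting chain of the open interval
(i.e. not counting the initial entry `x`). -/
noncomputable def intervalCoboundary {P : Type*} [PartialOrder P] [Fintype P]
    (x z : P) (m : ℕ) :
    IntervalCochain x z m →ₗ[ℤ] IntervalCochain x z (m + 1) :=
  Finsupp.lsum ℤ fun c => LinearMap.toSpanSingleton ℤ (IntervalCochain x z (m + 1))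
    (∑ c' : IntervalChain x z (m + 1), ∑ j : Fin (m + 2),
      (if c'.val ∘ j.succAbove = c.val then ((-1 : ℤ)) ^ ((j : ℕ) - 1) else 0) •
        Finsupp.single c' 1)

/-- The image of the previous differential inside `C̃^{m-2}(x,z)` (zero for `m = 0`). -/
noncomputable def intervalPrevRange {P : Type*} [PartialOrder P] [Fintype P]
    (x z : P) : ∀ m : ℕ, Submodule ℤ (IntervalCochain x z m)
  | 0 => ⊥
  | (k + 1) => LinearMap.range (intervalCoboundary x z k)

/-- The reduced cohomology group `H̃^{m-2}(x,z)` of the interval, as the quotient of the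
kernel of the outgoing differential by (the pullback to the kernel of) the image of the
incoming differential. -/
noncomputable abbrev intervalCohomology {P : Type*} [PartialOrder P] [Fintype P]
    (x z : P) (m : ℕ) : Type _ :=
  ↥(LinearMap.ker (intervalCoboundary x z m)) ⧸
    Submodule.comap (LinearMap.ker (intervalCoboundary x z m)).subtype
      (intervalPrevRange x z m)

/-- `μ(x,z) = Σ_i (-1)^i rank_ℤ H̃^i(x,z)`, the alternating sum of the ranks of the reduced
cohomology groups of the interval (with `i = m - 2`, so the sign is `(-1)^m`); the groups
vanish for `m ≥ card P`, so the sum below is the full alternating sum. -/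
noncomputable def muEuler {P : Type*} [PartialOrder P] [Fintype P] (x z : P) : ℤ :=
  ∑ m ∈ Finset.range (Fintype.card P + 2),
    (-1 : ℤ) ^ m * (Module.finrank ℤ (intervalCohomology x z m) : ℤ)

/-!
Inserting two elements into a chain in either order gives the same chain with opposite signs,
so the coboundary squares to zero and `μ(x,z)` is the Euler characteristic
`Σ_m (-1)^m c_m(x,z)` of the cochain complex, where `c_m(x,z)` counts the chains
`x = w₀ < ⋯ < w_m = z` (Philip Hall's theorem). A chain from `x` whose top lies below `y`
either ends at `y` or becomes one after appending `y`, so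
`Σ_{x ≤ z ≤ y} c_m(x,z) = c_m(x,y) + c_{m+1}(x,y)`; the alternating sum over `m` telescopes to
`c_0(x,y)`, which vanishes since `x ≠ y`.
-/

open Finset

theorem Fin.sum_neg_one_pow_smul_succAbove_comp_succAbove_eq_zero {M : Type*} [AddCommGroup M]
    {n : ℕ} (g : (Fin n → Fin (n + 2)) → M) :
    ∑ i : Fin (n + 2), ∑ j : Fin (n + 1),
      (-1 : ℤ) ^ (i + j : ℕ) • g (i.succAbove ∘ j.succAbove) = 0 := by
  rw [← sum_product']
  refine sum_involution (fun p _ => (p.1.succAbove p.2, p.2.predAbove p.1)) ?_ ?_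
    (fun _ _ => mem_univ _) ?_
  · rintro ⟨i, j⟩ -
    have hcomp : (i.succAbove j).succAbove ∘ (j.predAbove i).succAbove =
        i.succAbove ∘ j.succAbove :=
      funext (Fin.succAbove_succAbove_succAbove_predAbove i j)
    simp only [hcomp, Fin.neg_one_pow_succAbove_add_predAbove, neg_smul, add_neg_cancel]
  · rintro ⟨i, j⟩ - -
    simp [Fin.succAbove_ne]
  · rintro ⟨i, j⟩ -
    simp [Fin.succAbove_succAbove_predAbove, Fin.predAbove_predAbove_succAbove]

theorem Fin.strictMono_snoc {α : Type*} [Preorder α] {n : ℕ} {w : Fin (n + 1) → α} {a : α} :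
    StrictMono (Fin.snoc w a : Fin (n + 2) → α) ↔ StrictMono w ∧ w (Fin.last n) < a := by
  simp [Fin.strictMono_iff_lt_succ (f := w), Fin.strictMono_iff_lt_succ (n := n + 1),
    Fin.forall_fin_succ', Fin.succ_castSucc, -Fin.castSucc_succ]

theorem sum_range_neg_one_pow_mul_add_succ {R : Type*} [CommRing R] (f : ℕ → R) (n : ℕ) :
    ∑ i ∈ range n, (-1) ^ i * (f i + f (i + 1)) = f 0 - (-1) ^ n * f n := by
  calc ∑ i ∈ range n, (-1) ^ i * (f i + f (i + 1))
      = ∑ i ∈ range n, ((-1) ^ i * f i - (-1) ^ (i + 1) * f (i + 1)) :=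
        sum_congr rfl fun i _ => by ring
    _ = f 0 - (-1) ^ n * f n := by rw [sum_range_sub', pow_zero, one_mul]

namespace IntervalChain

variable {P : Type*} [PartialOrder P] {x z : P}

theorem card_eq_zero [Fintype P] {m : ℕ} (h : Fintype.card P ≤ m) :
    Fintype.card (IntervalChain x z m) = 0 :=
  Fintype.card_eq_zero_iff.mpr ⟨fun w => by
    simpa using (Fintype.card_le_of_injective w.val w.2.1.injective).trans h⟩

theorem card_zero_of_ne [Fintype P] (h : x ≠ z) : Fintype.card (IntervalChain x z 0) = 0 :=
  Fintype.card_eq_zero_iff.mpr ⟨fun w => h (w.2.2.1.symm.trans w.2.2.2)⟩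

theorem eq_zero_and_eq_last_of_comp_eq {n k : ℕ} {w : IntervalChain x z n}
    {v : IntervalChain x z k} {φ : Fin (k + 1) → Fin (n + 1)} (h : w.val ∘ φ = v.val) :
    φ 0 = 0 ∧ φ (Fin.last k) = Fin.last n :=
  ⟨w.2.1.injective ((congrFun h 0).trans (v.2.2.1.trans w.2.2.1.symm)),
    w.2.1.injective ((congrFun h _).trans (v.2.2.2.trans w.2.2.2.symm))⟩

theorem ne_zero_of_comp_succAbove_eq {m : ℕ} {w : IntervalChain x z (m + 1)}
    {v : IntervalChain x z m} {j : Fin (m + 2)} (h : w.val ∘ j.succAbove = v.val) : j ≠ 0 := by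
  rintro rfl
  simpa using (eq_zero_and_eq_last_of_comp_eq h).1

def erase {n : ℕ} (w : IntervalChain x z (n + 1)) (a : Fin (n + 2)) (ha₀ : a ≠ 0)
    (ha : a ≠ Fin.last _) : IntervalChain x z n :=
  ⟨w.val ∘ a.succAbove, w.2.1.comp (Fin.strictMono_succAbove a),
    by simp [Fin.succAbove_ne_zero_zero ha₀, w.2.2.1],
    by simp [Fin.succAbove_ne_last_last ha, w.2.2.2]⟩

theorem ne_zero_and_ne_last_of_comp_eq {m : ℕ} {w : IntervalChain x z (m + 2)}
    {v : IntervalChain x z m} {a : Fin (m + 3)} {b : Fin (m + 2)}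
    (h : w.val ∘ a.succAbove ∘ b.succAbove = v.val) : a ≠ 0 ∧ a ≠ Fin.last _ := by
  obtain ⟨h₀, hl⟩ := eq_zero_and_eq_last_of_comp_eq h
  refine ⟨?_, ?_⟩ <;> rintro rfl
  · simp at h₀
  · simp [Fin.castSucc_ne_last] at hl

end IntervalChain

section Coboundary

variable {P : Type*} [PartialOrder P] {x z : P} {m : ℕ}

noncomputable def intervalCoboundaryCoeff (c' : IntervalChain x z (m + 1))
    (c : IntervalChain x z m) : ℤ :=
  ∑ j : Fin (m + 2), if c'.val ∘ j.succAbove = c.val then (-1) ^ ((j : ℕ) - 1) else 0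

/-- The truncated exponent `j - 1` of the defining sign only matters at `j = 0`, where nothing
can be inserted below `x`. -/
theorem intervalCoboundaryCoeff_eq_neg_sum (c' : IntervalChain x z (m + 1))
    (c : IntervalChain x z m) :
    intervalCoboundaryCoeff c' c =
      -∑ j : Fin (m + 2), if c'.val ∘ j.succAbove = c.val then (-1) ^ (j : ℕ) else 0 := by
  rw [intervalCoboundaryCoeff, ← sum_neg_distrib]
  refine sum_congr rfl fun j _ => ?_
  split_ifs with h
  · obtain ⟨k, rfl⟩ := Fin.exists_succ_eq.mpr (IntervalChain.ne_zero_of_comp_succAbove_eq h)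
    simp [pow_succ]
  · simp

variable [Fintype P]

theorem intervalCoboundary_single (c : IntervalChain x z m) :
    intervalCoboundary x z m (Finsupp.single c 1) =
      ∑ c', intervalCoboundaryCoeff c' c • Finsupp.single c' 1 := by
  simp only [intervalCoboundary, Finsupp.lsum_single, LinearMap.toSpanSingleton_apply, one_smul,
    intervalCoboundaryCoeff, sum_smul]

theorem sum_ite_comp_succAbove_and (c'' : IntervalChain x z (m + 2)) (c : IntervalChain x z m)
    (a : Fin (m + 3)) (b : Fin (m + 2)) :
    (∑ c' : IntervalChain x z (m + 1),
      if c''.val ∘ a.succAbove = c'.val ∧ c'.val ∘ b.succAbove = c.val then (1 : ℤ) else 0) =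
      if c''.val ∘ a.succAbove ∘ b.succAbove = c.val then 1 else 0 := by
  split_ifs with h
  · obtain ⟨ha₀, ha⟩ := IntervalChain.ne_zero_and_ne_last_of_comp_eq h
    rw [sum_eq_single (c''.erase a ha₀ ha)]
    · exact if_pos ⟨rfl, h⟩
    · rintro c' - hc'
      exact if_neg fun h' => hc' (Subtype.ext h'.1.symm)
    · simp
  · refine sum_eq_zero fun c' _ => if_neg ?_
    rintro ⟨h₁, h₂⟩
    rw [← h₁] at h₂
    exact h h₂

theorem sum_intervalCoboundaryCoeff_mul (c'' : IntervalChain x z (m + 2))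
    (c : IntervalChain x z m) :
    ∑ c', intervalCoboundaryCoeff c'' c' * intervalCoboundaryCoeff c' c = 0 := by
  calc ∑ c', intervalCoboundaryCoeff c'' c' * intervalCoboundaryCoeff c' c
      = ∑ a : Fin (m + 3), ∑ b : Fin (m + 2), (-1 : ℤ) ^ (a + b : ℕ) •
          ∑ c' : IntervalChain x z (m + 1), if c''.val ∘ a.succAbove = c'.val ∧
            c'.val ∘ b.succAbove = c.val then (1 : ℤ) else 0 := by
        simp only [intervalCoboundaryCoeff_eq_neg_sum, neg_mul_neg, sum_mul_sum, smul_sum]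
        rw [sum_comm]
        refine sum_congr rfl fun a _ => ?_
        rw [sum_comm]
        refine sum_congr rfl fun b _ => sum_congr rfl fun c' _ => ?_
        split_ifs <;> simp_all [pow_add]
    _ = 0 := by
        simp only [sum_ite_comp_succAbove_and]
        exact Fin.sum_neg_one_pow_smul_succAbove_comp_succAbove_eq_zero
          fun φ => if c''.val ∘ φ = c.val then 1 else 0

theorem intervalCoboundary_comp_intervalCoboundary :
    intervalCoboundary x z (m + 1) ∘ₗ intervalCoboundary x z m = 0 := by
  refine Finsupp.lhom_ext' fun c => LinearMap.ext_ring ?_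
  simp only [LinearMap.comp_apply, Finsupp.lsingle_apply, intervalCoboundary_single, map_sum,
    map_zsmul, smul_sum, smul_smul, LinearMap.zero_apply]
  rw [sum_comm]
  simp only [← sum_smul, mul_comm (intervalCoboundaryCoeff _ c), sum_intervalCoboundaryCoeff_mul,
    zero_smul, sum_const_zero]

theorem intervalPrevRange_le_ker :
    ∀ m, intervalPrevRange x z m ≤ LinearMap.ker (intervalCoboundary x z m)
  | 0 => bot_le
  | _ + 1 => LinearMap.range_le_ker_iff.mpr intervalCoboundary_comp_intervalCoboundary

end Coboundary

section EulerPoincare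

variable {P : Type*} [PartialOrder P] [Fintype P] (x z : P)

theorem finrank_intervalCohomology (m : ℕ) :
    (Module.finrank ℤ (intervalCohomology x z m) : ℤ) =
      Fintype.card (IntervalChain x z m) - (Module.finrank ℤ (intervalPrevRange x z m) +
        Module.finrank ℤ (intervalPrevRange x z (m + 1))) := by
  have hH : Module.finrank ℤ (intervalCohomology x z m) +
      Module.finrank ℤ (intervalPrevRange x z m) =
        Module.finrank ℤ (LinearMap.ker (intervalCoboundary x z m)) := by
    rw [← (Submodule.comapSubtypeEquivOfLe (intervalPrevRange_le_ker m)).finrank_eq]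
    exact Submodule.finrank_quotient_add_finrank _
  have hZ : Module.finrank ℤ (intervalPrevRange x z (m + 1)) +
      Module.finrank ℤ (LinearMap.ker (intervalCoboundary x z m)) =
        Fintype.card (IntervalChain x z m) := by
    rw [← Module.finrank_finsupp_self ℤ, intervalPrevRange,
      ← (intervalCoboundary x z m).quotKerEquivRange.finrank_eq]
    exact Submodule.finrank_quotient_add_finrank _
  omega

theorem muEuler_eq_sum_card :
    muEuler x z = ∑ m ∈ range (Fintype.card P + 2),
      (-1 : ℤ) ^ m * (Fintype.card (IntervalChain x z m) : ℤ) := by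
  have hB₀ : Module.finrank ℤ (intervalPrevRange x z 0) = 0 := finrank_bot ℤ _
  have hB : Module.finrank ℤ (intervalPrevRange x z (Fintype.card P + 2)) = 0 := by
    have := Submodule.finrank_le (intervalPrevRange x z (Fintype.card P + 2))
    rwa [Module.finrank_finsupp_self, IntervalChain.card_eq_zero (by omega), Nat.le_zero] at this
  simp only [muEuler, finrank_intervalCohomology, mul_sub, sum_sub_distrib,
    sum_range_neg_one_pow_mul_add_succ (fun m => (Module.finrank ℤ (intervalPrevRange x z m) : ℤ)),
    hB₀, hB, Nat.cast_zero, mul_zero, sub_zero]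

end EulerPoincare

section Counting

variable {P : Type*} [PartialOrder P] [Fintype P] (x y : P) (m : ℕ)

theorem sum_card_intervalChain_eq_card_last_le :
    ∑ z : {z : P // x ≤ z ∧ z ≤ y}, Fintype.card (IntervalChain x z.val m) =
      Fintype.card {w : Fin (m + 1) → P // StrictMono w ∧ w 0 = x ∧ w (Fin.last m) ≤ y} := by
  rw [← Fintype.card_sigma]
  refine Fintype.card_congr
    { toFun := fun c => ⟨c.2.val, c.2.2.1, c.2.2.2.1, c.2.2.2.2.trans_le c.1.2.2⟩
      invFun := fun w => ⟨⟨w.val (Fin.last m), w.2.2.1.symm.trans_le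
          (w.2.1.monotone (Fin.zero_le _)), w.2.2.2⟩,
        ⟨w.val, w.2.1, w.2.2.1, rfl⟩⟩
      left_inv := fun c => Sigma.subtype_ext (Subtype.ext c.2.2.2.2) rfl
      right_inv := fun _ => rfl }

theorem card_last_le_eq_card_add_card_last_lt :
    Fintype.card {w : Fin (m + 1) → P // StrictMono w ∧ w 0 = x ∧ w (Fin.last m) ≤ y} =
      Fintype.card (IntervalChain x y m) +
        Fintype.card {w : Fin (m + 1) → P // StrictMono w ∧ w 0 = x ∧ w (Fin.last m) < y} := by
  simp_rw [le_iff_eq_or_lt, and_or_left]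
  exact Fintype.card_subtype_or_disjoint _ _ fun p hp₁ hp₂ w hw =>
    ((hp₁ w hw).2.2 ▸ (hp₂ w hw).2.2).false

theorem card_last_lt_eq_card_intervalChain_succ :
    Fintype.card {w : Fin (m + 1) → P // StrictMono w ∧ w 0 = x ∧ w (Fin.last m) < y} =
      Fintype.card (IntervalChain x y (m + 1)) :=
  Fintype.card_congr
    { toFun := fun w => ⟨Fin.snoc w.val y, Fin.strictMono_snoc.mpr ⟨w.2.1, w.2.2.2⟩,
        by simpa using w.2.2.1, Fin.snoc_last _ _⟩
      invFun := fun c => ⟨Fin.init c.val, c.2.1.comp Fin.strictMono_castSucc,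
        c.2.2.1, (c.2.1 (Fin.castSucc_lt_last _)).trans_eq c.2.2.2⟩
      left_inv := fun w => Subtype.ext (Fin.init_snoc (α := fun _ => P) y w.val)
      right_inv := fun c => Subtype.ext (c.2.2.2 ▸ Fin.snoc_init_self c.val) }

theorem sum_card_intervalChain :
    ∑ z : {z : P // x ≤ z ∧ z ≤ y}, Fintype.card (IntervalChain x z.val m) =
      Fintype.card (IntervalChain x y m) + Fintype.card (IntervalChain x y (m + 1)) := by
  rw [sum_card_intervalChain_eq_card_last_le, card_last_le_eq_card_add_card_last_lt,
    card_last_lt_eq_card_intervalChain_succ]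

end Counting

/-- Let `P` be a finite poset.  For `x ≤ y` define
`μ(x,y) = Σ_i (-1)^i rank_ℤ H̃^i(x,y)` (so in particular `μ(x,x) = 1`).  Then for every
pair `x < y` in `P` one has `Σ_{x ≤ z ≤ y} μ(x,z) = 0`. -/
theorem sum_muEuler_eq_zero {P : Type*} [PartialOrder P] [Fintype P]
    (x y : P) (hxy : x < y) :
    ∑ z : {z : P // x ≤ z ∧ z ≤ y}, muEuler x z.val = 0 := by
  set c : ℕ → ℤ := fun m => Fintype.card (IntervalChain x y m)
  calc ∑ z : {z : P // x ≤ z ∧ z ≤ y}, muEuler x z.val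
      = ∑ m ∈ range (Fintype.card P + 2), (-1) ^ m * (c m + c (m + 1)) := by
        simp only [muEuler_eq_sum_card, c]
        rw [sum_comm]
        simp_rw [← mul_sum, ← Nat.cast_sum, sum_card_intervalChain, Nat.cast_add]
    _ = c 0 - (-1) ^ (Fintype.card P + 2) * c (Fintype.card P + 2) :=
        sum_range_neg_one_pow_mul_add_succ c _
    _ = 0 := by
        simp [c, IntervalChain.card_zero_of_ne hxy.ne, IntervalChain.card_eq_zero]
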